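/- Let (Ω, μ) be a probability space, let w : Ω → [0,∞) be a weight, and let F ⊆ L¹(Ω, w dμ) be a class of integrable functions. Suppose ψ₁, …, ψ_{4n} are functions with pairwise disjoint supports such that ∫_Ω ψ_j w dμ ≥ δ for all j, and such that every function of the form ∑_{j=1}^{4n} α_j ψ_j with α_j ∈ {−1, 1} belongs to F. Then any deterministic quadrature rule using at most n function evaluations has worst-case error on F at least 2nδ (i.e., there exists f ∈ F with |∫ f w dμ − A_n(f)| ≥ 2nδ for any algorithm A_n using values at n points). -/

import Mathlib

/-!
At most one of the disjointly supported bumps is nonzero at any given point, so the `n` sample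
points see at most `n` of the `4n` bumps. The all-plus sign combination and the one with the
signs of the `≥ 3n` unseen bumps flipped produce the same data, while their weighted integrals
differ by at least `6nδ`; the algorithm errs by at least half of that on one of them.
-/

open MeasureTheory Finset Function

section SignedSums

variable {Ω ι : Type*} [Fintype ι] (ψ : ι → Ω → ℝ)

theorem card_filter_apply_ne_zero_le_one (hdisj : Pairwise (Disjoint on fun j => support (ψ j)))
    (x : Ω) : #{j | ψ j x ≠ 0} ≤ 1 := by
  refine card_le_one.2 fun a ha b hb => ?_
  by_contra hab
  exact Set.disjoint_left.1 (hdisj hab) (mem_filter.1 ha).2 (mem_filter.1 hb).2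

open scoped Classical in
noncomputable def seenIndices {κ : Type*} (ξ : κ → Ω) : Finset ι := {j | ∃ i, ψ j (ξ i) ≠ 0}

theorem card_seenIndices_le (hdisj : Pairwise (Disjoint on fun j => support (ψ j)))
    {κ : Type*} [Fintype κ] (ξ : κ → Ω) : #(seenIndices ψ ξ) ≤ Fintype.card κ := by
  classical
  have hunion : seenIndices ψ ξ = univ.biUnion fun i => {j | ψ j (ξ i) ≠ 0} := by
    ext j; simp [seenIndices]
  calc #(seenIndices ψ ξ) ≤ ∑ i : κ, #{j | ψ j (ξ i) ≠ 0} := hunion ▸ card_biUnion_le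
    _ ≤ ∑ _i : κ, 1 := sum_le_sum fun i _ => card_filter_apply_ne_zero_le_one ψ hdisj (ξ i)
    _ = Fintype.card κ := by simp

variable [MeasurableSpace Ω] {μ : Measure Ω} {w : Ω → ℝ}

theorem integrable_mul_of_integrable_signed_sums
    (h : ∀ α : ι → ℝ, (∀ j, α j = 1 ∨ α j = -1) →
      Integrable (fun x => (∑ j, α j * ψ j x) * w x) μ) (j : ι) :
    Integrable (fun x => ψ j x * w x) μ := by
  classical
  -- `ψ j` is half the difference of the all-plus sum and the sum with only the sign of `ψ j` flipped
  set α : ι → ℝ := 1 - Pi.single j 2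
  have hα : ∀ k, α k = 1 ∨ α k = -1 := fun k => by
    by_cases hk : k = j <;> simp [α, hk]; norm_num
  refine (((h 1 fun _ => Or.inl rfl).sub (h α hα)).const_mul 2⁻¹).congr (ae_of_all _ fun x => ?_)
  have hflip : ∑ k, ψ k x - ∑ k, α k * ψ k x = 2 * ψ j x := by
    simp [α, ← sum_sub_distrib, sub_mul, Pi.single_apply]
  simp only [Pi.one_apply, one_mul, Pi.sub_apply]
  rw [← sub_mul, hflip]
  ring

theorem integral_signed_sum_mul (hint : ∀ j, Integrable (fun x => ψ j x * w x) μ) (α : ι → ℝ) :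
    ∫ x, (∑ j, α j * ψ j x) * w x ∂μ = ∑ j, α j * ∫ x, ψ j x * w x ∂μ := by
  simp_rw [sum_mul, mul_assoc]
  rw [integral_finsetSum _ fun j _ => (hint j).const_mul (α j)]
  simp_rw [integral_const_mul]

theorem sub_div_two_le_abs_sub_or (a b c : ℝ) : (a - b) / 2 ≤ |a - c| ∨ (a - b) / 2 ≤ |b - c| := by
  by_contra! h
  linarith [le_abs_self (a - c), neg_abs_le (b - c)]

theorem sum_sub_sum_ite_mem_neg_ge [DecidableEq ι] (S : Finset ι) {I : ι → ℝ} {δ : ℝ}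
    (hI : ∀ j, δ ≤ I j) : 2 * (#Sᶜ * δ) ≤ ∑ j, I j - ∑ j, (if j ∈ S then 1 else -1) * I j := by
  have hflipped : #Sᶜ * δ ≤ ∑ j ∈ Sᶜ, I j := by
    simpa using card_nsmul_le_sum Sᶜ I δ fun j _ => hI j
  have hsplit : ∑ j, (if j ∈ S then 1 else -1) * I j = ∑ j ∈ S, I j - ∑ j ∈ Sᶜ, I j := by
    rw [← sum_add_sum_compl S, sub_eq_add_neg, ← sum_neg_distrib]
    congr 1 <;> exact sum_congr rfl fun j hj => by simp_all
  rw [hsplit, ← sum_add_sum_compl S I]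
  linarith

end SignedSums

theorem exists_mem_abs_integral_sub_ge {Ω ι κ : Type*} [MeasurableSpace Ω] [Fintype ι]
    [Fintype κ] {μ : Measure Ω} {w : Ω → ℝ} {F : Set (Ω → ℝ)}
    (hFint : ∀ f ∈ F, Integrable (fun x => f x * w x) μ) {δ : ℝ} (hδ : 0 ≤ δ) {ψ : ι → Ω → ℝ}
    (hdisj : Pairwise (Disjoint on fun j => support (ψ j)))
    (hψ : ∀ j, δ ≤ ∫ x, ψ j x * w x ∂μ)
    (hsign : ∀ α : ι → ℝ, (∀ j, α j = 1 ∨ α j = -1) → (fun x => ∑ j, α j * ψ j x) ∈ F)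
    (ξ : κ → Ω) (φ : (κ → ℝ) → ℝ) :
    ∃ f ∈ F, ((Fintype.card ι : ℝ) - Fintype.card κ) * δ ≤
      |(∫ x, f x * w x ∂μ) - φ (fun i => f (ξ i))| := by
  classical
  set S := seenIndices ψ ξ
  set β : ι → ℝ := fun j => if j ∈ S then 1 else -1
  have hβ : ∀ j, β j = 1 ∨ β j = -1 := fun j => by
    by_cases hj : j ∈ S <;> simp [β, hj]
  have hint := integrable_mul_of_integrable_signed_sums ψ fun α hα => hFint _ (hsign α hα)
  have hsame_data : (fun i => ∑ j, β j * ψ j (ξ i)) = fun i => ∑ j, (1 : ι → ℝ) j * ψ j (ξ i) := by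
    refine funext fun i => sum_congr rfl fun j _ => ?_
    by_cases hj : j ∈ S
    · simp [β, hj]
    · have : ψ j (ξ i) = 0 := by
        by_contra h
        exact hj (by simpa [S, seenIndices] using ⟨i, h⟩)
      simp [this]
  have hunseen : (Fintype.card ι : ℝ) - Fintype.card κ ≤ #Sᶜ := by
    have hS : #S ≤ Fintype.card κ := card_seenIndices_le ψ hdisj ξ
    have hSc : #S + #Sᶜ = Fintype.card ι := card_add_card_compl S
    rw [sub_le_iff_le_add]
    exact_mod_cast (by omega : Fintype.card ι ≤ #Sᶜ + Fintype.card κ)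
  have hgap : 2 * (((Fintype.card ι : ℝ) - Fintype.card κ) * δ) ≤
      (∫ x, (∑ j, (1 : ι → ℝ) j * ψ j x) * w x ∂μ) - ∫ x, (∑ j, β j * ψ j x) * w x ∂μ := by
    rw [integral_signed_sum_mul ψ hint, integral_signed_sum_mul ψ hint]
    have := sum_sub_sum_ite_mem_neg_ge S hψ
    have := mul_le_mul_of_nonneg_right hunseen hδ
    simp only [Pi.one_apply, one_mul]
    linarith
  obtain h | h := sub_div_two_le_abs_sub_or (∫ x, (∑ j, (1 : ι → ℝ) j * ψ j x) * w x ∂μ)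
    (∫ x, (∑ j, β j * ψ j x) * w x ∂μ) (φ fun i => ∑ j, β j * ψ j (ξ i))
  · refine ⟨_, hsign 1 fun _ => Or.inl rfl, ?_⟩
    rw [← hsame_data]
    linarith
  · exact ⟨_, hsign β hβ, by linarith⟩

theorem stmt2_general {Ω : Type*} [MeasurableSpace Ω] (μ : Measure Ω) (w : Ω → ℝ)
    (F : Set (Ω → ℝ)) (hFint : ∀ f ∈ F, Integrable (fun x => f x * w x) μ)
    (n : ℕ) (δ : ℝ) (hδ : 0 ≤ δ) (ψ : Fin (4 * n) → Ω → ℝ)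
    (hdisj : ∀ i j, i ≠ j → Disjoint (Function.support (ψ i)) (Function.support (ψ j)))
    (hψ : ∀ j, δ ≤ ∫ x, ψ j x * w x ∂μ)
    (hsign : ∀ α : Fin (4 * n) → ℝ, (∀ j, α j = 1 ∨ α j = -1) →
      (fun x => ∑ j, α j * ψ j x) ∈ F) :
    ∀ (ξ : Fin n → Ω) (φ : (Fin n → ℝ) → ℝ),
      ∃ f ∈ F, 2 * n * δ ≤ |(∫ x, f x * w x ∂μ) - φ (fun i => f (ξ i))| := by
  intro ξ φ
  obtain ⟨f, hf, herr⟩ :=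
    exists_mem_abs_integral_sub_ge hFint hδ (fun i j => hdisj i j) hψ hsign ξ φ
  refine ⟨f, hf, le_trans ?_ herr⟩
  simp only [Fintype.card_fin, Nat.cast_mul, Nat.cast_ofNat]
  nlinarith [mul_nonneg (Nat.cast_nonneg n : (0 : ℝ) ≤ n) hδ]

/-- Deterministic analogue of Novak's lemma: with `4n` disjointly supported bumps of weighted
integral `≥ δ`, all of whose sign combinations lie in `F`, any deterministic quadrature using
`n` function values has worst-case error on `F` at least `2nδ`. -/
theorem stmt2 {Ω : Type*} [MeasurableSpace Ω] (μ : Measure Ω) [IsProbabilityMeasure μ]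
    (w : Ω → ℝ) (hw : ∀ x, 0 ≤ w x)
    (F : Set (Ω → ℝ)) (hFint : ∀ f ∈ F, Integrable (fun x => f x * w x) μ)
    (n : ℕ) (δ : ℝ) (hδ : 0 ≤ δ) (ψ : Fin (4 * n) → Ω → ℝ)
    (hdisj : ∀ i j, i ≠ j → Disjoint (Function.support (ψ i)) (Function.support (ψ j)))
    (hψ : ∀ j, δ ≤ ∫ x, ψ j x * w x ∂μ)
    (hsign : ∀ α : Fin (4 * n) → ℝ, (∀ j, α j = 1 ∨ α j = -1) →
      (fun x => ∑ j, α j * ψ j x) ∈ F) :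
    ∀ (ξ : Fin n → Ω) (φ : (Fin n → ℝ) → ℝ),
      ∃ f ∈ F, 2 * n * δ ≤ |(∫ x, f x * w x ∂μ) - φ (fun i => f (ξ i))| :=
  stmt2_general μ w F hFint n δ hδ ψ hdisj hψ hsign
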